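/- For every integer k ≥ 0, the augmented Čech complex 0 → R[kS ∩ Z^2] → R[x,y] ⊕ R[x^{-1},y] ⊕ R[x,y^{-1}] ⊕ R[x^{-1},y^{-1}] → R[x,x^{-1},y] ⊕ R[x,y,y^{-1}] ⊕ R[x^{-1},y,y^{-1}] ⊕ R[x,x^{-1},y^{-1}] → R[x,x^{-1},y,y^{-1}] → 0 is exact, where the first map is given by the column (x^k y^k, x^{-k} y^k, x^k y^{-k}, x^{-k} y^{-k}), the second by the matrix ((−x^{-k}, x^k, 0, 0),(y^{-k}, 0, −y^k, 0),(0, −y^{-k}, 0, y^k),(0, 0, x^{-k}, −x^k)), and the third by the row (y^{-k}, x^{-k}, x^k, y^k). -/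

import Mathlib

noncomputable section

variable (R : Type) [CommRing R]

/-- The Laurent polynomial ring `L = R[x,x⁻¹,y,y⁻¹]`, realised as the monoid algebra of
`ℤ × ℤ` over `R`.  Its various subrings (`R[x,y]`, `R[x,x⁻¹,y]`, ….) are cut out by support
conditions on the coefficients `f (i,j)` of the monomials `x^i y^j`. -/
abbrev L2 := AddMonoidAlgebra R (ℤ × ℤ)

/-- The monomial `x^a y^b ∈ L`. -/
noncomputable def mono (a b : ℤ) : L2 R := AddMonoidAlgebra.single (a, b) (1 : R)

/-- Membership in the subring `R[x,y]` (support in the first quadrant). -/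
def Qpp (f : L2 R) : Prop := ∀ i j : ℤ, i < 0 ∨ j < 0 → f.coeff (i, j) = 0
/-- Membership in the subring `R[x⁻¹,y]`. -/
def Qmp (f : L2 R) : Prop := ∀ i j : ℤ, 0 < i ∨ j < 0 → f.coeff (i, j) = 0
/-- Membership in the subring `R[x,y⁻¹]`. -/
def Qpm (f : L2 R) : Prop := ∀ i j : ℤ, i < 0 ∨ 0 < j → f.coeff (i, j) = 0
/-- Membership in the subring `R[x⁻¹,y⁻¹]`. -/
def Qmm (f : L2 R) : Prop := ∀ i j : ℤ, 0 < i ∨ 0 < j → f.coeff (i, j) = 0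
/-- Membership in the subring `R[x,x⁻¹,y]`. -/
def Hxy (f : L2 R) : Prop := ∀ i j : ℤ, j < 0 → f.coeff (i, j) = 0
/-- Membership in the subring `R[x,y,y⁻¹]`. -/
def Hyx (f : L2 R) : Prop := ∀ i j : ℤ, i < 0 → f.coeff (i, j) = 0
/-- Membership in the subring `R[x⁻¹,y,y⁻¹]`. -/
def Hym (f : L2 R) : Prop := ∀ i j : ℤ, 0 < i → f.coeff (i, j) = 0
/-- Membership in the subring `R[x,x⁻¹,y⁻¹]`. -/
def Hxm (f : L2 R) : Prop := ∀ i j : ℤ, 0 < j → f.coeff (i, j) = 0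
/-- Membership in the free `R`-module `R[kS ∩ ℤ²]` on the lattice points of the `k`-th
dilate of the square `S = [−1,1]²`, i.e. support in the box `[−k,k]²`. -/
def InBox (k : ℕ) (f : L2 R) : Prop :=
  ∀ i j : ℤ, i < -(k : ℤ) ∨ (k : ℤ) < i ∨ j < -(k : ℤ) ∨ (k : ℤ) < j → f.coeff (i, j) = 0

/-!
Multiplication by a monomial only translates supports. Conjugating by the monomials
`x^{±k} y^{±k}` turns every map of the complex into a signed sum of inclusions: it becomes the
Čech complex, coefficient by coefficient, of the cover of `ℤ²` by four quadrants translated so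
that they meet exactly in the box `[-k,k]²`. Exactness at the quadrants then says that these
quadrants intersect in the box, and a cocycle `(p, q, r, s)` of half-plane terms is lifted by
cutting `p` and `q` along the lines `i = k` and `j = k`.
-/

section

variable {R}

lemma coeff_mono_mul (a b : ℤ) (f : L2 R) (i j : ℤ) :
    (mono R a b * f).coeff (i, j) = f.coeff (i - a, j - b) := by
  rw [mono, AddMonoidAlgebra.coeff_single_mul_apply, one_mul, neg_add_eq_sub, Prod.mk_sub_mk]

lemma mono_mul_mono_mul (a b c d : ℤ) (f : L2 R) :
    mono R a b * (mono R c d * f) = mono R (a + c) (b + d) * f := by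
  rw [← mul_assoc, mono, mono, mono, AddMonoidAlgebra.single_mul_single, one_mul, Prod.mk_add_mk]

@[simp]
lemma mono_zero_mul (f : L2 R) : mono R 0 0 * f = f :=
  one_mul f

@[simp]
lemma mono_neg_mul_mono_mul (a b : ℤ) (f : L2 R) : mono R (-a) (-b) * (mono R a b * f) = f := by
  simp [mono_mul_mono_mul]

@[simp]
lemma mono_mul_mono_neg_mul (a b : ℤ) (f : L2 R) : mono R a b * (mono R (-a) (-b) * f) = f := by
  simpa using mono_neg_mul_mono_mul (-a) (-b) f

lemma mono_mul_eq_zero_iff {a b : ℤ} {f : L2 R} : mono R a b * f = 0 ↔ f = 0 :=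
  ⟨fun h => by simpa using congrArg (mono R (-a) (-b) * ·) h, fun h => by rw [h, mul_zero]⟩

lemma coeff_mono_mul_eq_zero {P Q : ℤ → ℤ → Prop} {a b : ℤ} {f : L2 R}
    (hf : ∀ i j, P i j → f.coeff (i, j) = 0) (hQP : ∀ i j, Q i j → P (i - a) (j - b)) :
    ∀ i j, Q i j → (mono R a b * f).coeff (i, j) = 0 := fun i j hQ => by
  rw [coeff_mono_mul]
  exact hf _ _ (hQP i j hQ)

lemma d0_twist_eq (k : ℤ) (a b c d : L2 R) :
    -(mono R (-k) 0 * (mono R k k * a)) + mono R k 0 * (mono R (-k) k * b) =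
        mono R 0 k * (b - a) ∧
      mono R 0 (-k) * (mono R k k * a) - mono R 0 k * (mono R k (-k) * c) =
        mono R k 0 * (a - c) ∧
      -(mono R 0 (-k) * (mono R (-k) k * b)) + mono R 0 k * (mono R (-k) (-k) * d) =
        mono R (-k) 0 * (d - b) ∧
      mono R (-k) 0 * (mono R k (-k) * c) - mono R k 0 * (mono R (-k) (-k) * d) =
        mono R 0 (-k) * (c - d) := by
  simp only [mono_mul_mono_mul, mul_sub]
  refine ⟨?_, ?_, ?_, ?_⟩ <;> ring_nf

def restrict (P : ℤ × ℤ → Prop) [DecidablePred P] (f : L2 R) : L2 R :=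
  .ofCoeff (f.coeff.filter P)

lemma coeff_restrict (P : ℤ × ℤ → Prop) [DecidablePred P] (f : L2 R) (ij : ℤ × ℤ) :
    (restrict P f).coeff ij = if P ij then f.coeff ij else 0 :=
  Finsupp.filter_apply _ _ _

lemma restrict_add_restrict_not (P : ℤ × ℤ → Prop) [DecidablePred P] (f : L2 R) :
    restrict P f + restrict (fun ij => ¬P ij) f = f :=
  congrArg AddMonoidAlgebra.ofCoeff (Finsupp.filter_add_filter_not f.coeff P)

lemma exists_quadrant_lift {k : ℤ} (hk : 0 ≤ k) {p q r s : L2 R}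
    (hp : ∀ i j, j < -k → p.coeff (i, j) = 0) (hq : ∀ i j, i < -k → q.coeff (i, j) = 0)
    (hr : ∀ i j, k < i → r.coeff (i, j) = 0) (hs : ∀ i j, k < j → s.coeff (i, j) = 0)
    (h : p + q + r + s = 0) :
    ∃ a b c d : L2 R,
      (∀ i j, i < -k ∨ j < -k → a.coeff (i, j) = 0) ∧
      (∀ i j, k < i ∨ j < -k → b.coeff (i, j) = 0) ∧
      (∀ i j, i < -k ∨ k < j → c.coeff (i, j) = 0) ∧
      (∀ i j, k < i ∨ k < j → d.coeff (i, j) = 0) ∧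
      p = b - a ∧ q = a - c ∧ r = d - b ∧ s = c - d := by
  have hsum : ∀ i j, p.coeff (i, j) + q.coeff (i, j) + r.coeff (i, j) + s.coeff (i, j) = 0 := by
    intro i j
    simpa using congrArg (fun f : L2 R => f.coeff (i, j)) h
  -- `a + p` must vanish for `i > k` and `a - q` for `j > k`; on the corner `i, j > k` both
  -- requirements agree because there `p + q = -(r + s) = 0`.
  set a := -restrict (fun ij => k < ij.1) p + restrict (fun ij => ij.1 ≤ k ∧ k < ij.2) q
  have ha : ∀ i j, a.coeff (i, j) =
      -(if k < i then p.coeff (i, j) else 0) + if i ≤ k ∧ k < j then q.coeff (i, j) else 0 := by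
    intro i j
    simp only [a, AddMonoidAlgebra.coeff_add, AddMonoidAlgebra.coeff_neg, Finsupp.add_apply,
      Finsupp.neg_apply, coeff_restrict]
  refine ⟨a, a + p, a - q, a - q - s, ?_, ?_, ?_, ?_, by abel, by abel,
    by linear_combination h, by abel⟩ <;>
  · intro i j hij
    simp only [AddMonoidAlgebra.coeff_add, AddMonoidAlgebra.coeff_sub, Finsupp.add_apply,
      Finsupp.sub_apply, ha]
    grind

lemma inBox_of_quadrants (k : ℕ) {e : L2 R} (ha : Qpp R (mono R k k * e))
    (hb : Qmp R (mono R (-k) k * e)) (hc : Qpm R (mono R k (-k) * e)) : InBox R k e := by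
  intro i j hij
  rcases hij with h | h | h | h
  · simpa [coeff_mono_mul] using ha (i + k) (j + k) (by omega)
  · simpa [coeff_mono_mul] using hb (i - k) (j + k) (by omega)
  · simpa [coeff_mono_mul] using ha (i + k) (j + k) (by omega)
  · simpa [coeff_mono_mul] using hc (i + k) (j - k) (by omega)

theorem exact_at_quadrants (k : ℕ) {a b c d : L2 R} (ha : Qpp R a) (hb : Qmp R b) (hc : Qpm R c)
    (h₁ : -(mono R (-k) 0 * a) + mono R k 0 * b = 0) (h₂ : mono R 0 (-k) * a - mono R 0 k * c = 0)
    (h₄ : mono R (-k) 0 * c - mono R k 0 * d = 0) :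
    ∃ e : L2 R, InBox R k e ∧
      a = mono R k k * e ∧ b = mono R (-k) k * e ∧
        c = mono R k (-k) * e ∧ d = mono R (-k) (-k) * e := by
  obtain ⟨a, rfl⟩ : ∃ a', a = mono R k k * a' := ⟨_, (mono_mul_mono_neg_mul _ _ a).symm⟩
  obtain ⟨b, rfl⟩ : ∃ b', b = mono R (-k) k * b' := ⟨_, (mono_mul_mono_neg_mul _ _ b).symm⟩
  obtain ⟨c, rfl⟩ : ∃ c', c = mono R k (-k) * c' := ⟨_, (mono_mul_mono_neg_mul _ _ c).symm⟩
  obtain ⟨d, rfl⟩ : ∃ d', d = mono R (-k) (-k) * d' := ⟨_, (mono_mul_mono_neg_mul _ _ d).symm⟩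
  obtain ⟨e₁, e₂, -, e₄⟩ := d0_twist_eq (k : ℤ) a b c d
  rw [e₁, mono_mul_eq_zero_iff, sub_eq_zero] at h₁
  rw [e₂, mono_mul_eq_zero_iff, sub_eq_zero] at h₂
  rw [e₄, mono_mul_eq_zero_iff, sub_eq_zero] at h₄
  subst h₁ h₂ h₄
  exact ⟨_, inBox_of_quadrants k ha hb hc, rfl, rfl, rfl, rfl⟩

theorem exact_at_halfPlanes (k : ℕ) {p q r s : L2 R} (hp : Hxy R p) (hq : Hyx R q) (hr : Hym R r)
    (hs : Hxm R s)
    (h : mono R 0 (-k) * p + mono R (-k) 0 * q + mono R k 0 * r + mono R 0 k * s = 0) :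
    ∃ a b c d : L2 R, Qpp R a ∧ Qmp R b ∧ Qpm R c ∧ Qmm R d ∧
      p = -(mono R (-k) 0 * a) + mono R k 0 * b ∧
      q = mono R 0 (-k) * a - mono R 0 k * c ∧
      r = -(mono R 0 (-k) * b) + mono R 0 k * d ∧
      s = mono R (-k) 0 * c - mono R k 0 * d := by
  obtain ⟨a, b, c, d, ha, hb, hc, hd, hab, hac, hbd, hcd⟩ :=
    exists_quadrant_lift (Int.natCast_nonneg k)
      (coeff_mono_mul_eq_zero hp fun _ _ _ => by omega)
      (coeff_mono_mul_eq_zero hq fun _ _ _ => by omega)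
      (coeff_mono_mul_eq_zero hr fun _ _ _ => by omega)
      (coeff_mono_mul_eq_zero hs fun _ _ _ => by omega) h
  obtain ⟨e₁, e₂, e₃, e₄⟩ := d0_twist_eq (k : ℤ) a b c d
  refine ⟨mono R k k * a, mono R (-k) k * b, mono R k (-k) * c, mono R (-k) (-k) * d,
    coeff_mono_mul_eq_zero ha fun _ _ _ => by omega,
    coeff_mono_mul_eq_zero hb fun _ _ _ => by omega,
    coeff_mono_mul_eq_zero hc fun _ _ _ => by omega,
    coeff_mono_mul_eq_zero hd fun _ _ _ => by omega,
    ?_, ?_, ?_, ?_⟩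
  · rw [e₁, ← hab, mono_mul_mono_mul]; simp
  · rw [e₂, ← hac, mono_mul_mono_mul]; simp
  · rw [e₃, ← hbd, mono_mul_mono_mul]; simp
  · rw [e₄, ← hcd, mono_mul_mono_mul]; simp

theorem d_one_surjective (k : ℕ) (w : L2 R) :
    ∃ p q r s : L2 R, Hxy R p ∧ Hyx R q ∧ Hym R r ∧ Hxm R s ∧
      w = mono R 0 (-k) * p + mono R (-k) 0 * q + mono R k 0 * r + mono R 0 k * s := by
  refine ⟨mono R 0 k * restrict (fun ij => 0 ≤ ij.2) w, 0, 0,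
    mono R 0 (-k) * restrict (fun ij => ¬0 ≤ ij.2) w, fun i j hj => ?_, fun _ _ _ => rfl,
    fun _ _ _ => rfl, fun i j hj => ?_, ?_⟩
  · rw [coeff_mono_mul, coeff_restrict, if_neg (by omega)]
  · rw [coeff_mono_mul, coeff_restrict, if_neg (by omega)]
  · simp only [mul_zero, add_zero, mono_mul_mono_mul, add_neg_cancel, neg_add_cancel, mono_zero_mul]
    exact (restrict_add_restrict_not _ w).symm

end

theorem cech_complex_of_square_exact (k : ℕ) :
    -- `d⁻¹` is injective:
    (∀ e : L2 R, InBox R k e →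
      mono R k k * e = 0 ∧ mono R (-k) k * e = 0 ∧
        mono R k (-k) * e = 0 ∧ mono R (-k) (-k) * e = 0 → e = 0) ∧
    -- exactness at the quadrant spot: `ker d⁰ = im d⁻¹`:
    (∀ a b c d : L2 R, Qpp R a → Qmp R b → Qpm R c → Qmm R d →
      (-(mono R (-k) 0 * a) + mono R k 0 * b = 0 ∧
       mono R 0 (-k) * a - mono R 0 k * c = 0 ∧
       -(mono R 0 (-k) * b) + mono R 0 k * d = 0 ∧
       mono R (-k) 0 * c - mono R k 0 * d = 0) →
      ∃ e : L2 R, InBox R k e ∧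
        a = mono R k k * e ∧ b = mono R (-k) k * e ∧
        c = mono R k (-k) * e ∧ d = mono R (-k) (-k) * e) ∧
    -- exactness at the half-plane spot: `ker d¹ = im d⁰`:
    (∀ p q r s : L2 R, Hxy R p → Hyx R q → Hym R r → Hxm R s →
      mono R 0 (-k) * p + mono R (-k) 0 * q + mono R k 0 * r + mono R 0 k * s = 0 →
      ∃ a b c d : L2 R, Qpp R a ∧ Qmp R b ∧ Qpm R c ∧ Qmm R d ∧
        p = -(mono R (-k) 0 * a) + mono R k 0 * b ∧
        q = mono R 0 (-k) * a - mono R 0 k * c ∧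
        r = -(mono R 0 (-k) * b) + mono R 0 k * d ∧
        s = mono R (-k) 0 * c - mono R k 0 * d) ∧
    -- `d¹` is surjective:
    (∀ w : L2 R, ∃ p q r s : L2 R, Hxy R p ∧ Hyx R q ∧ Hym R r ∧ Hxm R s ∧
      w = mono R 0 (-k) * p + mono R (-k) 0 * q + mono R k 0 * r + mono R 0 k * s) := by
  refine ⟨fun e _ h => mono_mul_eq_zero_iff.mp h.1, ?_, ?_, d_one_surjective k⟩
  · rintro a b c d ha hb hc - ⟨h₁, h₂, -, h₄⟩
    exact exact_at_quadrants k ha hb hc h₁ h₂ h₄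
  · intro p q r s hp hq hr hs h
    exact exact_at_halfPlanes k hp hq hr hs h
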